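/- Fix d, h ∈ ℕ and set |Λ^n| := (2n)^d. Let {S^n}_{n∈ℕ} be a strongly regular and strongly nearly additive ℝ^h-valued process consisting of integrable random variables, and suppose sup_{n∈ℕ} ‖E[S^n]‖/|Λ^n| < ∞. Then the limit Ŝ := lim_{n→∞} E[S^n]/|Λ^n| exists in ℝ^h, and S^n/|Λ^n| → Ŝ almost surely as n → ∞. -/

import Mathlib

open MeasureTheory Filter
open scoped ENNReal RealInnerProductSpace

namespace RandomCubical

variable {Ω : Type*} [MeasurableSpace Ω]

/-- `|Λ^n| = (2n)^d`. -/
noncomputable def vol (d n : ℕ) : ℝ := (2 * (n : ℝ)) ^ d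

/-- The lattice box `ℤ^d ∩ [-m, m]^d`. -/
noncomputable def box (d m : ℕ) : Finset (Fin d → ℤ) :=
  Fintype.piFinset fun _ => Finset.Icc (-(m : ℤ)) (m : ℤ)

/-- The conditions of strong `r`-near additivity, for a given witness family
`T n z` (`z ∈ ℤ^d`) of independent copies of `S n`:
`sup_{m} |Λ^{(2m+1)k}|⁻¹ ‖S^{(2m+1)k} - ∑_z S^{k-r,z}‖ → 0` almost surely as `k → ∞`. -/
def StrongNAWitness (d h : ℕ) (P : Measure Ω) (S : ℕ → Ω → EuclideanSpace ℝ (Fin h))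
    (r : ℕ) (T : ℕ → (Fin d → ℤ) → Ω → EuclideanSpace ℝ (Fin h)) : Prop :=
  (∀ n, 1 ≤ n → ProbabilityTheory.iIndepFun (T n) P) ∧
  (∀ n, 1 ≤ n → ∀ z, ProbabilityTheory.IdentDistrib (T n z) (S n) P P) ∧
  ∀ᵐ ω ∂P, ∀ ε > (0 : ℝ), ∃ K : ℕ, r < K ∧ ∀ k, K ≤ k → ∀ m : ℕ, 1 ≤ m →
    ‖S ((2 * m + 1) * k) ω - ∑ z ∈ box d m, T (k - r) z ω‖ ≤ ε * vol d ((2 * m + 1) * k)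

/-- Strongly nearly additive process. -/
def StrongNearlyAdditive (d h : ℕ) (P : Measure Ω)
    (S : ℕ → Ω → EuclideanSpace ℝ (Fin h)) : Prop :=
  ∃ r T, StrongNAWitness d h P S r T

/-- Strongly regular process: for each fixed `k`,
`|Λ^n|⁻¹ ‖S^n - S^{(2 m_n + 1)k}‖ → 0` almost surely as `n → ∞`, where `m_n` is the
unique integer with `(2 m_n + 1)k ≤ n < (2 m_n + 3)k`. -/
def StrongRegular (d h : ℕ) (P : Measure Ω)
    (S : ℕ → Ω → EuclideanSpace ℝ (Fin h)) : Prop :=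
  ∀ k, 1 ≤ k → ∀ᵐ ω ∂P, ∀ ε > (0 : ℝ), ∃ N : ℕ, ∀ n, N ≤ n → ∀ m : ℕ,
    (2 * m + 1) * k ≤ n → n < (2 * m + 3) * k →
    ‖S n ω - S ((2 * m + 1) * k) ω‖ ≤ ε * vol d n

/-!
Near additivity compares `S^{(2m+1)k}` with a sum of `(2m+1)^d` independent copies of `S^{k-r}`,
so by Etemadi's strong law along the growing boxes `S^{(2m+1)k} / |Λ^{(2m+1)k}|` ends up near
`μ_k := E[S^{k-r}] / |Λ^k|` as `m → ∞`. Regularity transfers this to every `n`, because the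
largest odd multiple `(2m+1)k ≤ n` satisfies `|Λ^{(2m+1)k}| / |Λ^n| → 1`. So for almost every `ω`
and every `ε > 0`, `S^n(ω) / |Λ^n|` is eventually `ε`-close to `μ_k` for all large `k`; this forces
`(μ_k)` to be Cauchy, and its limit `Ŝ` is the almost sure limit of `S^n / |Λ^n|`. Finally
`E[S^n] / |Λ^n| = (|Λ^{n+r}| / |Λ^n|) μ_{n+r} → Ŝ`.
-/

open ProbabilityTheory
open scoped Topology Finset

section Enumeration

variable {α : Type*}

noncomputable def exhaustingList [DecidableEq α] (s : ℕ → Finset α) : ℕ → List α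
  | 0 => (s 0).toList
  | m + 1 => exhaustingList s m ++ (s (m + 1) \ s m).toList

variable {s : ℕ → Finset α}

lemma nodup_exhaustingList_and_toFinset [DecidableEq α] (hs : Monotone s) (m : ℕ) :
    (exhaustingList s m).Nodup ∧ (exhaustingList s m).toFinset = s m := by
  induction m with
  | zero => exact ⟨(s 0).nodup_toList, (s 0).toList_toFinset⟩
  | succ m ih =>
    obtain ⟨hnodup, hfinset⟩ := ih
    refine ⟨List.nodup_append.2 ⟨hnodup, (s _ \ s m).nodup_toList, ?_⟩, ?_⟩
    · rintro a ha b hb rfl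
      rw [← List.mem_toFinset, hfinset] at ha
      simp [ha] at hb
    · rw [exhaustingList, List.toFinset_append, hfinset, Finset.toList_toFinset,
        Finset.union_sdiff_of_subset (hs m.le_succ)]

lemma length_exhaustingList [DecidableEq α] (hs : Monotone s) (m : ℕ) :
    (exhaustingList s m).length = #(s m) := by
  obtain ⟨hnodup, hfinset⟩ := nodup_exhaustingList_and_toFinset hs m
  rw [← List.toFinset_card_of_nodup hnodup, hfinset]

lemma exhaustingList_prefix [DecidableEq α] {m m' : ℕ} (h : m ≤ m') :
    exhaustingList s m <+: exhaustingList s m' := by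
  induction h with
  | refl => exact List.prefix_refl _
  | step _ ih => exact ih.trans (List.prefix_append _ _)

theorem exists_injective_image_Iio_card (hs : Monotone s)
    (hcard : Tendsto (fun m => #(s m)) atTop atTop) :
    ∃ e : ℕ → α, Function.Injective e ∧ ∀ m, e '' Set.Iio #(s m) = s m := by
  classical
  choose idx hidx using fun i => (hcard.eventually_gt_atTop i).exists
  have hlen := length_exhaustingList hs
  let e i := (exhaustingList s (idx i))[i]'(by rw [hlen]; exact hidx i)
  have he : ∀ i m (hi : i < #(s m)), e i = (exhaustingList s m)[i]'(by rw [hlen]; exact hi) :=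
    fun i m hi => ((exhaustingList_prefix (le_max_left (idx i) m)).getElem _).trans
      ((exhaustingList_prefix (le_max_right (idx i) m)).getElem _).symm
  refine ⟨e, fun i j hij => ?_, fun m => ?_⟩
  · set M := max (idx i) (idx j)
    have hiM : i < #(s M) := (hidx i).trans_le (Finset.card_le_card (hs (le_max_left _ _)))
    have hjM : j < #(s M) := (hidx j).trans_le (Finset.card_le_card (hs (le_max_right _ _)))
    rw [he i M hiM, he j M hjM] at hij
    exact (nodup_exhaustingList_and_toFinset hs M).1.getElem_inj_iff.1 hij
  · obtain ⟨-, hfinset⟩ := nodup_exhaustingList_and_toFinset hs m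
    ext a
    simp only [Set.mem_image, Set.mem_Iio, Finset.mem_coe]
    constructor
    · rintro ⟨i, hi, rfl⟩
      rw [← hfinset, List.mem_toFinset, he i m hi]
      exact List.getElem_mem _
    · intro ha
      rw [← hfinset, List.mem_toFinset, List.mem_iff_getElem] at ha
      obtain ⟨i, hi, rfl⟩ := ha
      rw [hlen] at hi
      exact ⟨i, hi, he i m hi⟩

end Enumeration

theorem strong_law_ae_finset {α E : Type*} [NormedAddCommGroup E] [NormedSpace ℝ E]
    [CompleteSpace E] [MeasurableSpace E] [BorelSpace E] {μ : Measure Ω} {X : α → Ω → E}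
    {Y : Ω → E} (hint : Integrable Y μ)
    (hindep : Pairwise fun a b => X a ⟂ᵢ[μ] X b)
    (hident : ∀ a, IdentDistrib (X a) Y μ μ) {s : ℕ → Finset α}
    (hs : Monotone s) (hcard : Tendsto (fun m => #(s m)) atTop atTop) :
    ∀ᵐ ω ∂μ, Tendsto (fun m => (#(s m) : ℝ)⁻¹ • ∑ a ∈ s m, X a ω) atTop (𝓝 (∫ ω, Y ω ∂μ)) := by
  obtain ⟨e, he, himage⟩ := exists_injective_image_Iio_card hs hcard
  have hsum : ∀ m ω, ∑ i ∈ Finset.range #(s m), X (e i) ω = ∑ a ∈ s m, X a ω := fun m ω =>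
    Finset.sum_nbij e (fun i hi => by
      rw [← Finset.mem_coe, ← himage m]
      exact Set.mem_image_of_mem e (Finset.mem_range.1 hi))
      he.injOn (by rw [Finset.coe_range, Set.SurjOn, himage m]) fun _ _ => rfl
  have hslln := strong_law_ae (fun i => X (e i))
    ((hident _).integrable_iff.2 hint) (fun i j hij => hindep (he.ne hij))
    fun i => (hident _).trans (hident _).symm
  rw [(hident _).integral_eq] at hslln
  filter_upwards [hslln] with ω hω
  simpa only [Function.comp_def, hsum] using hω.comp hcard

lemma box_mono (d : ℕ) : Monotone (box d) := fun _ _ hab =>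
  Fintype.piFinset_subset _ _ fun _ => Finset.Icc_subset_Icc (by omega) (by omega)

lemma card_box (d m : ℕ) : #(box d m) = (2 * m + 1) ^ d := by
  rw [box, Fintype.card_piFinset, Finset.prod_const, Int.card_Icc, Finset.card_univ,
    Fintype.card_fin]
  congr 1
  omega

lemma tendsto_card_box {d : ℕ} (hd : 0 < d) : Tendsto (fun m => #(box d m)) atTop atTop :=
  tendsto_atTop_mono (fun m => by
    rw [card_box]
    calc m ≤ 2 * m + 1 := by omega
      _ ≤ (2 * m + 1) ^ d := Nat.le_self_pow hd.ne' _) tendsto_id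

lemma vol_pos (d : ℕ) {n : ℕ} (hn : 0 < n) : 0 < vol d n := by
  unfold vol
  positivity

lemma vol_mono (d : ℕ) : Monotone (vol d) := fun a b hab => by
  unfold vol
  gcongr

lemma vol_mul (d a b : ℕ) : vol d (a * b) = (a : ℝ) ^ d * vol d b := by
  simp only [vol, Nat.cast_mul, ← mul_pow]
  ring_nf

lemma vol_div_vol (d a b : ℕ) : vol d a / vol d b = ((a : ℝ) / b) ^ d := by
  rw [vol, vol, ← div_pow, mul_div_mul_left _ _ two_ne_zero]

lemma tendsto_vol_div_vol (d : ℕ) {g : ℕ → ℕ} {c : ℝ}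
    (hg : ∀ᶠ n in atTop, |(g n : ℝ) - n| ≤ c) :
    Tendsto (fun n => vol d (g n) / vol d n) atTop (𝓝 1) := by
  have hsmall : Tendsto (fun n => ((g n : ℝ) - n) / n) atTop (𝓝 0) := by
    refine squeeze_zero_norm' ?_ (tendsto_const_div_atTop_nhds_zero_nat c)
    filter_upwards [hg] with n hn
    rw [norm_div, Real.norm_eq_abs, RCLike.norm_natCast]
    gcongr
  have hratio : Tendsto (fun n => (g n : ℝ) / n) atTop (𝓝 1) := by
    have := hsmall.const_add 1
    rw [add_zero] at this
    refine this.congr' ?_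
    filter_upwards [eventually_gt_atTop 0] with n hn
    field_simp
    ring
  simpa only [vol_div_vol, one_pow] using hratio.pow d

def oddBlockIndex (k n : ℕ) : ℕ := (n / k - 1) / 2

lemma oddBlockIndex_spec {k n : ℕ} (hk : 0 < k) (hkn : k ≤ n) :
    (2 * oddBlockIndex k n + 1) * k ≤ n ∧ n < (2 * oddBlockIndex k n + 3) * k := by
  have hq : 1 ≤ n / k := (Nat.one_le_div_iff hk).2 hkn
  have hlow : (2 * oddBlockIndex k n + 1) * k ≤ n / k * k :=
    Nat.mul_le_mul_right k (by unfold oddBlockIndex; omega)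
  have hhigh : n / k * k + k ≤ (2 * oddBlockIndex k n + 3) * k := by
    rw [← Nat.succ_mul]
    exact Nat.mul_le_mul_right k (by unfold oddBlockIndex; omega)
  exact ⟨hlow.trans (Nat.div_mul_le_self n k), (Nat.lt_div_mul_add hk).trans_le hhigh⟩

lemma tendsto_oddBlockIndex {k : ℕ} (hk : 0 < k) : Tendsto (oddBlockIndex k) atTop atTop :=
  (Nat.tendsto_div_const_atTop two_ne_zero).comp
    ((tendsto_sub_atTop_nat 1).comp (Nat.tendsto_div_const_atTop hk.ne'))

section Perturbation

variable {ι E : Type*} [NormedAddCommGroup E] [NormedSpace ℝ E] {l : Filter ι}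
  {x y : ι → E} {v w : ι → ℝ} {c : E} {ε : ℝ}

lemma eventually_norm_inv_smul_sub_le_of_norm_sub_le (hε : 0 < ε) (hv : ∀ᶠ i in l, 0 < v i)
    (hxy : ∀ᶠ i in l, ‖x i - y i‖ ≤ ε * v i) (hy : Tendsto (fun i => (v i)⁻¹ • y i) l (𝓝 c)) :
    ∀ᶠ i in l, ‖(v i)⁻¹ • x i - c‖ ≤ 2 * ε := by
  filter_upwards [hv, hxy, hy.eventually (Metric.closedBall_mem_nhds c hε)] with i hv hxy hy
  rw [dist_eq_norm] at hy
  have hdiff : ‖(v i)⁻¹ • (x i - y i)‖ ≤ ε := by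
    rw [norm_smul, Real.norm_of_nonneg (inv_nonneg.2 hv.le), inv_mul_le_iff₀ hv]
    linarith
  calc ‖(v i)⁻¹ • x i - c‖ = ‖(v i)⁻¹ • (x i - y i) + ((v i)⁻¹ • y i - c)‖ := by
        congr 1
        rw [smul_sub]
        abel
    _ ≤ ε + ε := (norm_add_le _ _).trans (add_le_add hdiff hy)
    _ = 2 * ε := by ring

lemma eventually_norm_inv_smul_sub_le_of_tendsto_div (hε : 0 < ε)
    (hvw : ∀ᶠ i in l, 0 < w i ∧ w i ≤ v i) (hratio : Tendsto (fun i => w i / v i) l (𝓝 1))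
    (hxy : Tendsto (fun i => (v i)⁻¹ • (x i - y i)) l (𝓝 0))
    (hy : ∀ᶠ i in l, ‖(w i)⁻¹ • y i - c‖ ≤ ε) :
    ∀ᶠ i in l, ‖(v i)⁻¹ • x i - c‖ ≤ 2 * ε := by
  have herr : Tendsto (fun i => (v i)⁻¹ • (x i - y i) + (w i / v i - 1) • c) l (𝓝 0) := by
    simpa using hxy.add ((hratio.sub_const 1).smul_const c)
  filter_upwards [hvw, hy, herr.eventually (Metric.closedBall_mem_nhds 0 hε)]
    with i ⟨hw, hwv⟩ hy herr
  rw [dist_zero_right] at herr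
  have hv : 0 < v i := hw.trans_le hwv
  have hρ : ‖w i / v i‖ ≤ 1 := by
    rw [Real.norm_of_nonneg (div_nonneg hw.le hv.le)]
    exact div_le_one_of_le₀ hwv hv.le
  calc ‖(v i)⁻¹ • x i - c‖
        = ‖((v i)⁻¹ • (x i - y i) + (w i / v i - 1) • c) + (w i / v i) • ((w i)⁻¹ • y i - c)‖ := by
        have hcancel : w i / v i * (w i)⁻¹ = (v i)⁻¹ := by field_simp
        congr 1
        rw [smul_sub, smul_sub (w i / v i), smul_smul, hcancel, sub_smul, one_smul]
        abel
    _ ≤ ε + 1 * ε := (norm_add_le _ _).trans (add_le_add herr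
        ((norm_smul_le _ _).trans (mul_le_mul hρ hy (norm_nonneg _) zero_le_one)))
    _ = 2 * ε := by ring

end Perturbation

section ApproximateLimits

variable {β X : Type*} [PseudoMetricSpace X] {l : Filter β} {a : β → X} {μ : ℕ → X}

lemma cauchySeq_of_forall_eventually_dist_le [l.NeBot]
    (h : ∀ ε > 0, ∀ᶠ k in atTop, ∀ᶠ n in l, dist (a n) (μ k) ≤ ε) : CauchySeq μ := by
  refine Metric.cauchySeq_iff'.2 fun ε hε => ?_
  obtain ⟨K, hK⟩ := eventually_atTop.1 (h (ε / 3) (by positivity))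
  refine ⟨K, fun k hk => ?_⟩
  obtain ⟨n, hnk, hnK⟩ := ((hK k hk).and (hK K le_rfl)).exists
  calc dist (μ k) (μ K) ≤ dist (a n) (μ k) + dist (a n) (μ K) := dist_triangle_left _ _ _
    _ < ε := by linarith

lemma tendsto_of_forall_eventually_dist_le {L : X}
    (h : ∀ ε > 0, ∀ᶠ k in atTop, ∀ᶠ n in l, dist (a n) (μ k) ≤ ε)
    (hμ : Tendsto μ atTop (𝓝 L)) : Tendsto a l (𝓝 L) := by
  refine Metric.tendsto_nhds.2 fun ε hε => ?_
  obtain ⟨k, hk, hkL⟩ := ((h (ε / 2) (by positivity)).and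
    (Metric.tendsto_nhds.1 hμ (ε / 2) (by positivity))).exists
  filter_upwards [hk] with n hn
  calc dist (a n) L ≤ dist (a n) (μ k) + dist (μ k) L := dist_triangle _ _ _
    _ < ε := by linarith

end ApproximateLimits

section Blocks

variable {E : Type*} [NormedAddCommGroup E] [NormedSpace ℝ E]

lemma tendsto_vol_inv_smul_of_tendsto_sub {x : ℕ → E} {L : E} (d r : ℕ)
    (h : Tendsto (fun k => (vol d k)⁻¹ • x (k - r)) atTop (𝓝 L)) :
    Tendsto (fun n => (vol d n)⁻¹ • x n) atTop (𝓝 L) := by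
  have hratio : Tendsto (fun n => vol d (n + r) / vol d n) atTop (𝓝 1) :=
    tendsto_vol_div_vol d (c := r) (Eventually.of_forall fun n => by simp)
  have hprod := hratio.smul (h.comp (tendsto_add_atTop_nat r))
  rw [one_smul] at hprod
  refine hprod.congr' ?_
  filter_upwards [eventually_gt_atTop 0] with n hn
  have hcancel : vol d (n + r) / vol d n * (vol d (n + r))⁻¹ = (vol d n)⁻¹ := by
    field_simp [(vol_pos d (hn.trans_le (n.le_add_right r))).ne']
  simp only [Function.comp_apply, Nat.add_sub_cancel, smul_smul, hcancel]

theorem forall_eventually_dist_vol_inv_smul_le (d : ℕ) {s : ℕ → E} {σ : ℕ → ℕ → E}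
    {μ : ℕ → E}
    (hadd : ∀ ε > 0, ∀ᶠ k in atTop, ∀ m, 1 ≤ m →
      ‖s ((2 * m + 1) * k) - σ k m‖ ≤ ε * vol d ((2 * m + 1) * k))
    (hσ : ∀ᶠ k in atTop,
      Tendsto (fun m => (vol d ((2 * m + 1) * k))⁻¹ • σ k m) atTop (𝓝 (μ k)))
    (hreg : ∀ k, 0 < k → Tendsto
      (fun n => (vol d n)⁻¹ • (s n - s ((2 * oddBlockIndex k n + 1) * k))) atTop (𝓝 0)) :
    ∀ ε > 0, ∀ᶠ k in atTop, ∀ᶠ n in atTop, dist ((vol d n)⁻¹ • s n) (μ k) ≤ ε := by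
  intro ε hε
  filter_upwards [hadd (ε / 4) (by positivity), hσ, eventually_gt_atTop 0]
    with k hk_add hk_σ hk
  have hblock : ∀ᶠ m in atTop,
      ‖(vol d ((2 * m + 1) * k))⁻¹ • s ((2 * m + 1) * k) - μ k‖ ≤ 2 * (ε / 4) :=
    eventually_norm_inv_smul_sub_le_of_norm_sub_le (by positivity)
      (Eventually.of_forall fun m => vol_pos d (by positivity))
      ((eventually_ge_atTop 1).mono hk_add) hk_σ
  set f := fun n => (2 * oddBlockIndex k n + 1) * k
  have hf : ∀ᶠ n in atTop, k ≤ f n ∧ f n ≤ n ∧ n < f n + 2 * k := by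
    filter_upwards [eventually_ge_atTop k] with n hn
    obtain ⟨hlow, hhigh⟩ := oddBlockIndex_spec hk hn
    refine ⟨Nat.le_mul_of_pos_left k (by omega), hlow, by simp only [f]; linarith⟩
  have hvol : ∀ᶠ n in atTop, 0 < vol d (f n) ∧ vol d (f n) ≤ vol d n :=
    hf.mono fun n hn => ⟨vol_pos d (hk.trans_le hn.1), vol_mono d hn.2.1⟩
  have hratio : Tendsto (fun n => vol d (f n) / vol d n) atTop (𝓝 1) := by
    refine tendsto_vol_div_vol d (c := 2 * k) (hf.mono fun n hn => ?_)
    have hle : (f n : ℝ) ≤ n := by exact_mod_cast hn.2.1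
    have hlt : (n : ℝ) < f n + 2 * k := by exact_mod_cast hn.2.2
    rw [abs_le]
    constructor <;> linarith
  filter_upwards [eventually_norm_inv_smul_sub_le_of_tendsto_div (by positivity) hvol hratio
    (hreg k hk) ((tendsto_oddBlockIndex hk).eventually hblock)] with n hn
  rw [dist_eq_norm]
  linarith

end Blocks

section

variable {d h : ℕ} {P : Measure Ω} {S : ℕ → Ω → EuclideanSpace ℝ (Fin h)}

lemma StrongRegular.ae_tendsto (hreg : StrongRegular d h P S) :
    ∀ᵐ ω ∂P, ∀ k, 0 < k → Tendsto
      (fun n => (vol d n)⁻¹ • (S n ω - S ((2 * oddBlockIndex k n + 1) * k) ω)) atTop (𝓝 0) := by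
  refine ae_all_iff.2 fun k => eventually_imp_distrib_left.2 fun hk => ?_
  filter_upwards [hreg k hk] with ω hω
  refine Metric.tendsto_atTop.2 fun ε hε => ?_
  obtain ⟨N, hN⟩ := hω (ε / 2) (by positivity)
  refine ⟨max N k, fun n hn => ?_⟩
  obtain ⟨hlow, hhigh⟩ := oddBlockIndex_spec hk (le_of_max_le_right hn)
  have hv := vol_pos d (hk.trans_le (le_of_max_le_right hn))
  rw [dist_zero_right, norm_smul, Real.norm_of_nonneg (inv_nonneg.2 hv.le), inv_mul_lt_iff₀ hv]
  linarith [hN n (le_of_max_le_left hn) _ hlow hhigh, mul_pos hv hε]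

lemma StrongNAWitness.ae_tendsto_vol_inv_smul_sum_box {r : ℕ}
    {T : ℕ → (Fin d → ℤ) → Ω → EuclideanSpace ℝ (Fin h)} (hd : 0 < d)
    (hint : ∀ n, Integrable (S n) P) (hT : StrongNAWitness d h P S r T) :
    ∀ᵐ ω ∂P, ∀ᶠ k in atTop, Tendsto
      (fun m => (vol d ((2 * m + 1) * k))⁻¹ • ∑ z ∈ box d m, T (k - r) z ω) atTop
      (𝓝 ((vol d k)⁻¹ • ∫ ω, S (k - r) ω ∂P)) := by
  have hslln : ∀ᵐ ω ∂P, ∀ j, 1 ≤ j → Tendsto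
      (fun m => (#(box d m) : ℝ)⁻¹ • ∑ z ∈ box d m, T j z ω) atTop (𝓝 (∫ ω, S j ω ∂P)) :=
    ae_all_iff.2 fun j => eventually_imp_distrib_left.2 fun hj =>
      strong_law_ae_finset (hint j) (fun _ _ hab => (hT.1 j hj).indepFun hab) (hT.2.1 j hj)
        (box_mono d) (tendsto_card_box hd)
  filter_upwards [hslln] with ω hω
  filter_upwards [eventually_gt_atTop r] with k hk
  refine ((hω (k - r) (by omega)).const_smul (vol d k)⁻¹).congr fun m => ?_
  rw [smul_smul, ← mul_inv, vol_mul, card_box, Nat.cast_pow, mul_comm]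

end

theorem slln_of_strongRegular_strongNearlyAdditive_general
    (d h : ℕ) (hd : 1 ≤ d)
    (P : Measure Ω) [IsProbabilityMeasure P]
    (S : ℕ → Ω → EuclideanSpace ℝ (Fin h))
    (hint : ∀ n, Integrable (S n) P)
    (hreg : StrongRegular d h P S) (hadd : StrongNearlyAdditive d h P S) :
    ∃ Shat : EuclideanSpace ℝ (Fin h),
      Tendsto (fun n => (vol d n)⁻¹ • ∫ ω, S n ω ∂P) atTop (nhds Shat) ∧
      ∀ᵐ ω ∂P, Tendsto (fun n => (vol d n)⁻¹ • S n ω) atTop (nhds Shat) := by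
  obtain ⟨r, T, hT⟩ := hadd
  set μ := fun k => (vol d k)⁻¹ • ∫ ω, S (k - r) ω ∂P
  have key : ∀ᵐ ω ∂P, ∀ ε > 0, ∀ᶠ k in atTop, ∀ᶠ n in atTop,
      dist ((vol d n)⁻¹ • S n ω) (μ k) ≤ ε := by
    filter_upwards [hT.2.2, hT.ae_tendsto_vol_inv_smul_sum_box hd hint, hreg.ae_tendsto]
      with ω hω_add hω_σ hω_reg
    refine forall_eventually_dist_vol_inv_smul_le d (fun ε hε => ?_) hω_σ hω_reg
    obtain ⟨K, -, hK⟩ := hω_add ε hε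
    exact eventually_atTop.2 ⟨K, hK⟩
  obtain ⟨ω₀, hω₀⟩ := key.exists
  obtain ⟨Shat, hShat⟩ :=
    cauchySeq_tendsto_of_complete (cauchySeq_of_forall_eventually_dist_le hω₀)
  exact ⟨Shat, tendsto_vol_inv_smul_of_tendsto_sub d r hShat,
    key.mono fun ω hω => tendsto_of_forall_eventually_dist_le hω hShat⟩

theorem slln_of_strongRegular_strongNearlyAdditive
    (d h : ℕ) (hd : 1 ≤ d) (hh : 1 ≤ h)
    (P : Measure Ω) [IsProbabilityMeasure P]
    (S : ℕ → Ω → EuclideanSpace ℝ (Fin h)) (hmeas : ∀ n, Measurable (S n))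
    (hint : ∀ n, Integrable (S n) P)
    (hreg : StrongRegular d h P S) (hadd : StrongNearlyAdditive d h P S)
    (hbound : ∃ C : ℝ, ∀ n, 1 ≤ n → ‖∫ ω, S n ω ∂P‖ ≤ C * vol d n) :
    ∃ Shat : EuclideanSpace ℝ (Fin h),
      Tendsto (fun n => (vol d n)⁻¹ • ∫ ω, S n ω ∂P) atTop (nhds Shat) ∧
      ∀ᵐ ω ∂P, Tendsto (fun n => (vol d n)⁻¹ • S n ω) atTop (nhds Shat) :=
  slln_of_strongRegular_strongNearlyAdditive_general d h hd P S hint hreg hadd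

end RandomCubical
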